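/- arXiv:1808.07172 — 2 statements merged into one kernel-verified Lean document; each statement's English description precedes it below -/
import Mathlib

section
/- Let x ∈ ℝ^m be fixed, let the weights w_{ik} (1 ≤ i ≤ n, 1 ≤ k ≤ m) be i.i.d. Gaussian N(0, σ²/m) and the biases b_i (1 ≤ i ≤ n) be i.i.d. Gaussian N(0, σ_b²), all mutually independent, and set u_i = Σ_{k=1}^m w_{ik} x_k + b_i. Let ψ : ℝ → ℝ be measurable with |ψ| ≤ M. Then for any fixed distinct column indices j ≠ j', the sum S' = Σ_{i=1}^n ψ(u_i)² w_{ij} w_{ij'} is a sum of n i.i.d. random variables and satisfies Var(S') ≤ n M⁴ σ⁴ / m². -/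
open MeasureTheory ProbabilityTheory NNReal

/-! Grouping the independent Gaussian entries unit by unit, the parameter rows
`(w i ·, b i)` are independent and identically distributed, and each summand
`ψ(u i)² w i j w i j'` is one fixed measurable function of row `i`; so the summands are i.i.d.
and the variance of the sum is the sum of their variances. For a single summand,
`Var ≤ E[ψ(u)⁴ w_j² w_j'²] ≤ M⁴ E[w_j²] E[w_j'²] = M⁴ (σ²/m)²`, where the expectation
factorises because `w i j` and `w i j'` are independent for `j ≠ j'`. -/

namespace ProbabilityTheory

variable {Ω : Type*} [MeasurableSpace Ω] {P : Measure Ω}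

lemma iIndepFun.curry {ι κ β : Type*} [MeasurableSpace β] {X : ι → κ → Ω → β}
    (hX : ∀ i k, Measurable (X i k)) (h : iIndepFun (fun p : ι × κ ↦ X p.1 p.2) P) :
    iIndepFun (fun i ω k ↦ X i k ω) P := by
  have := h.isProbabilityMeasure
  have _ i k := Measure.isProbabilityMeasure_map (μ := P) (hX i k).aemeasurable
  have _ i := Measure.isProbabilityMeasure_map (μ := P) (f := fun ω k ↦ X i k ω)
    (measurable_pi_lambda _ (hX i)).aemeasurable
  have hrow i : iIndepFun (X i) P := h.precomp (g := Prod.mk i) (Prod.mk_right_injective i)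
  rw [iIndepFun_iff_map_fun_eq_infinitePi_map (fun i ↦ measurable_pi_lambda _ (hX i))]
  have hcurry : (fun ω i k ↦ X i k ω) = MeasurableEquiv.curry ι κ β ∘ fun ω p ↦ X p.1 p.2 ω := rfl
  rw [hcurry, ← Measure.map_map (by fun_prop) (by fun_prop),
    show P.map (fun ω (p : ι × κ) ↦ X p.1 p.2 ω) = _ from
      h.map_fun_eq_infinitePi_map fun p ↦ hX p.1 p.2,
    Measure.infinitePi_map_curry fun i k ↦ P.map (X i k)]
  congr 1 with i : 1
  exact ((hrow i).map_fun_eq_infinitePi_map (hX i)).symm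

lemma integral_sq_gaussianReal (μ : ℝ) (v : ℝ≥0) :
    ∫ x, x ^ 2 ∂gaussianReal μ v = μ ^ 2 + v := by
  have h := variance_eq_sub (memLp_id_gaussianReal (μ := μ) (v := v) 2)
  rw [variance_id_gaussianReal] at h
  simp only [id_eq, Pi.pow_apply, integral_id_gaussianReal] at h
  linarith

lemma integral_sq_of_map_eq_gaussianReal {X : Ω → ℝ} (hX : AEMeasurable X P) {μ : ℝ} {v : ℝ≥0}
    (hlaw : P.map X = gaussianReal μ v) :
    ∫ ω, X ω ^ 2 ∂P = μ ^ 2 + v := by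
  rw [← integral_sq_gaussianReal μ v, ← hlaw, integral_map hX (by fun_prop)]

lemma memLp_of_map_eq_gaussianReal {X : Ω → ℝ} (hX : AEMeasurable X P) {μ : ℝ} {v : ℝ≥0}
    (hlaw : P.map X = gaussianReal μ v) (p : ℝ≥0) :
    MemLp X p P := by
  refine (memLp_map_measure_iff (g := id) aestronglyMeasurable_id hX).1 ?_
  rw [hlaw]
  exact memLp_id_gaussianReal p

lemma IndepFun.integral_mul_sq {X Y : Ω → ℝ} (hXY : IndepFun X Y P) (hX : MemLp X 2 P)
    (hY : MemLp Y 2 P) :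
    ∫ ω, (X ω * Y ω) ^ 2 ∂P = (∫ ω, X ω ^ 2 ∂P) * ∫ ω, Y ω ^ 2 ∂P := by
  simp_rw [mul_pow]
  have hsq := hXY.comp (measurable_id.pow_const 2) (measurable_id.pow_const 2)
  exact hsq.integral_fun_mul_eq_mul_integral hX.integrable_sq.aestronglyMeasurable
    hY.integrable_sq.aestronglyMeasurable

lemma IndepFun.memLp_two_mul {X Y : Ω → ℝ} (hXY : IndepFun X Y P) (hX : MemLp X 2 P)
    (hY : MemLp Y 2 P) :
    MemLp (fun ω ↦ X ω * Y ω) 2 P := by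
  refine (memLp_two_iff_integrable_sq (hX.1.mul hY.1)).2 ?_
  simp only [Pi.mul_apply, mul_pow]
  exact (hXY.comp (measurable_id.pow_const 2) (measurable_id.pow_const 2)).integrable_mul
    hX.integrable_sq hY.integrable_sq

lemma IndepFun.memLp_two_mul_mul {c X Y : Ω → ℝ} {C : ℝ} (hc : AEStronglyMeasurable c P)
    (hcC : ∀ ω, |c ω| ≤ C) (hXY : IndepFun X Y P) (hX : MemLp X 2 P) (hY : MemLp Y 2 P) :
    MemLp (fun ω ↦ c ω * (X ω * Y ω)) 2 P := by
  refine ((hXY.memLp_two_mul hX hY).const_mul C).of_le (hc.mul (hX.1.mul hY.1))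
    (ae_of_all _ fun ω ↦ ?_)
  rw [norm_mul, norm_mul C]
  exact mul_le_mul_of_nonneg_right ((hcC ω).trans (le_abs_self C)) (norm_nonneg _)

lemma IndepFun.variance_mul_mul_le [IsProbabilityMeasure P] {c X Y : Ω → ℝ} {C : ℝ}
    (hc : AEStronglyMeasurable c P) (hcC : ∀ ω, |c ω| ≤ C) (hXY : IndepFun X Y P)
    (hX : MemLp X 2 P) (hY : MemLp Y 2 P) :
    variance (fun ω ↦ c ω * (X ω * Y ω)) P ≤ C ^ 2 * ((∫ ω, X ω ^ 2 ∂P) * ∫ ω, Y ω ^ 2 ∂P) :=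
  calc variance (fun ω ↦ c ω * (X ω * Y ω)) P
      ≤ ∫ ω, (c ω * (X ω * Y ω)) ^ 2 ∂P := variance_le_expectation_sq (hc.mul (hX.1.mul hY.1))
    _ ≤ ∫ ω, C ^ 2 * (X ω * Y ω) ^ 2 ∂P := by
      refine integral_mono_of_nonneg (ae_of_all _ fun _ ↦ sq_nonneg _)
        ((hXY.memLp_two_mul hX hY).integrable_sq.const_mul _) (ae_of_all _ fun ω ↦ ?_)
      dsimp only
      rw [mul_pow, ← sq_abs (c ω)]
      gcongr
      exact hcC ω
    _ = C ^ 2 * ((∫ ω, X ω ^ 2 ∂P) * ∫ ω, Y ω ^ 2 ∂P) := by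
      rw [integral_const_mul, hXY.integral_mul_sq hX hY]

lemma iIndepFun.variance_sum_le {ι : Type*} [Fintype ι] {X : ι → Ω → ℝ} {V : ℝ}
    (h : iIndepFun X P) (hX : ∀ i, MemLp (X i) 2 P) (hV : ∀ i, variance (X i) P ≤ V) :
    variance (fun ω ↦ ∑ i, X i ω) P ≤ Fintype.card ι * V := by
  have := h.isProbabilityMeasure
  have hsum : (fun ω ↦ ∑ i, X i ω) = ∑ i, X i := by ext; simp
  rw [hsum, IndepFun.variance_sum (fun i _ ↦ hX i) fun i _ j _ hij ↦ h.indepFun hij]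
  calc ∑ i, variance (X i) P ≤ ∑ _i : ι, V := Finset.sum_le_sum fun i _ ↦ hV i
    _ = Fintype.card ι * V := by simp

section LayerDefs

variable {ι κ Ω β : Type*}

def layerIndex : ι × Option κ → (ι × κ) ⊕ ι
  | (i, some k) => .inl (i, k)
  | (i, none) => .inr i

lemma layerIndex_injective : Function.Injective (layerIndex : ι × Option κ → (ι × κ) ⊕ ι) := by
  rintro ⟨i, _ | k⟩ ⟨i', _ | k'⟩ h <;> simp_all [layerIndex]

def layerRow (W : ι → κ → Ω → β) (B : ι → Ω → β) (i : ι) (ω : Ω) : Option κ → β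
  | some k => W i k ω
  | none => B i ω

lemma layerRow_eq_comp_layerIndex (W : ι → κ → Ω → β) (B : ι → Ω → β) :
    layerRow W B = fun i ω t ↦ Sum.elim (fun p : ι × κ ↦ W p.1 p.2) B (layerIndex (i, t)) ω := by
  ext i ω (_ | k) <;> rfl

end LayerDefs

section Layer

variable {ι κ β : Type*} [MeasurableSpace β] {W : ι → κ → Ω → β} {B : ι → Ω → β}

lemma measurable_layerRow (hW : ∀ i k, Measurable (W i k)) (hB : ∀ i, Measurable (B i))
    (i : ι) (t : Option κ) :
    Measurable fun ω ↦ layerRow W B i ω t := by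
  cases t
  exacts [hB i, hW i _]

lemma iIndepFun_layerRow (hW : ∀ i k, Measurable (W i k)) (hB : ∀ i, Measurable (B i))
    (h : iIndepFun (Sum.elim (fun p : ι × κ ↦ W p.1 p.2) B) P) :
    iIndepFun (layerRow W B) P := by
  rw [layerRow_eq_comp_layerIndex]
  exact (h.precomp layerIndex_injective).curry fun i t ↦ by
    simpa only [layerRow_eq_comp_layerIndex] using measurable_layerRow hW hB i t

lemma map_layerRow [Fintype κ] (hW : ∀ i k, Measurable (W i k)) (hB : ∀ i, Measurable (B i))
    (h : iIndepFun (Sum.elim (fun p : ι × κ ↦ W p.1 p.2) B) P) {μW μB : Measure β}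
    (hW_law : ∀ i k, P.map (W i k) = μW) (hB_law : ∀ i, P.map (B i) = μB) (i : ι) :
    P.map (layerRow W B i) = Measure.pi fun t : Option κ ↦ t.elim μB fun _ ↦ μW := by
  have hinj : Function.Injective fun t : Option κ ↦ layerIndex (i, t) :=
    layerIndex_injective.comp (Prod.mk_right_injective i)
  rw [layerRow_eq_comp_layerIndex, (h.precomp hinj).map_fun_eq_pi_map fun t ↦ ?_]
  · congr with (_ | k) : 1
    exacts [hB_law i, hW_law i k]
  · simpa only [layerRow_eq_comp_layerIndex] using (measurable_layerRow hW hB i t).aemeasurable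

lemma identDistrib_layerRow [Fintype κ] (hW : ∀ i k, Measurable (W i k))
    (hB : ∀ i, Measurable (B i)) (h : iIndepFun (Sum.elim (fun p : ι × κ ↦ W p.1 p.2) B) P)
    {μW μB : Measure β} (hW_law : ∀ i k, P.map (W i k) = μW) (hB_law : ∀ i, P.map (B i) = μB)
    (i i' : ι) :
    IdentDistrib (layerRow W B i) (layerRow W B i') P P where
  aemeasurable_fst := (measurable_pi_lambda _ (measurable_layerRow hW hB i)).aemeasurable
  aemeasurable_snd := (measurable_pi_lambda _ (measurable_layerRow hW hB i')).aemeasurable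
  map_eq := by rw [map_layerRow hW hB h hW_law hB_law, map_layerRow hW hB h hW_law hB_law]

end Layer

end ProbabilityTheory

theorem domino_offdiagonal_general
    {Ω : Type*} [MeasurableSpace Ω] (P : Measure Ω) [IsProbabilityMeasure P]
    (n m : ℕ) (x : Fin m → ℝ) (σ2 σb2 : ℝ≥0)
    (w : Fin n → Fin m → Ω → ℝ) (b : Fin n → Ω → ℝ)
    (hw_meas : ∀ i k, Measurable (w i k)) (hb_meas : ∀ i, Measurable (b i))
    (hw_law : ∀ i k, Measure.map (w i k) P = gaussianReal 0 (σ2 / (m : ℝ≥0)))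
    (hb_law : ∀ i, Measure.map (b i) P = gaussianReal 0 σb2)
    (hindep : iIndepFun
      (Sum.elim (fun p : Fin n × Fin m => w p.1 p.2) b) P)
    (ψ : ℝ → ℝ) (hψ : Measurable ψ) (M : ℝ) (hM : ∀ t, |ψ t| ≤ M)
    (j j' : Fin m) (hjj' : j ≠ j') :
    iIndepFun
        (fun i : Fin n => fun ω =>
          ψ (∑ k, w i k ω * x k + b i ω) ^ 2 * (w i j ω * w i j' ω)) P
    ∧ (∀ i i' : Fin n,
        IdentDistrib
          (fun ω => ψ (∑ k, w i k ω * x k + b i ω) ^ 2 * (w i j ω * w i j' ω))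
          (fun ω => ψ (∑ k, w i' k ω * x k + b i' ω) ^ 2 * (w i' j ω * w i' j' ω)) P P)
    ∧ variance
        (fun ω => ∑ i, ψ (∑ k, w i k ω * x k + b i ω) ^ 2 * (w i j ω * w i j' ω)) P
      ≤ n * M ^ 4 * (σ2 : ℝ) ^ 2 / (m : ℝ) ^ 2 := by
  set v : ℝ≥0 := σ2 / (m : ℝ≥0)
  set G : (Option (Fin m) → ℝ) → ℝ := fun y ↦
    ψ (∑ k, y (some k) * x k + y none) ^ 2 * (y (some j) * y (some j'))
  have hG : Measurable G := by fun_prop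
  have hsummands := (iIndepFun_layerRow hw_meas hb_meas hindep).comp (fun _ ↦ G) fun _ ↦ hG
  refine ⟨hsummands, fun i i' ↦
    (identDistrib_layerRow hw_meas hb_meas hindep hw_law hb_law i i').comp hG, ?_⟩
  have hψ_sq : ∀ t, |ψ t ^ 2| ≤ M ^ 2 := fun t ↦ by
    rw [abs_pow]
    exact pow_le_pow_left₀ (abs_nonneg _) (hM t) 2
  have hψ_meas : ∀ i, AEStronglyMeasurable (fun ω ↦ ψ (∑ k, w i k ω * x k + b i ω) ^ 2) P :=
    fun i ↦ Measurable.aestronglyMeasurable (by fun_prop)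
  have hw_memLp : ∀ i k, MemLp (w i k) 2 P := fun i k ↦
    memLp_of_map_eq_gaussianReal (hw_meas i k).aemeasurable (hw_law i k) 2
  have hw_sq : ∀ i k, ∫ ω, w i k ω ^ 2 ∂P = v := fun i k ↦ by
    simpa using integral_sq_of_map_eq_gaussianReal (hw_meas i k).aemeasurable (hw_law i k)
  have hw_indep : ∀ i, IndepFun (w i j) (w i j') P := fun i ↦
    hindep.indepFun (i := .inl (i, j)) (j := .inl (i, j')) (by simp [hjj'])
  calc _ ≤ Fintype.card (Fin n) * ((M ^ 2) ^ 2 * (v * v)) := by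
        refine hsummands.variance_sum_le (fun i ↦ (hw_indep i).memLp_two_mul_mul (hψ_meas i)
          (fun _ ↦ hψ_sq _) (hw_memLp i j) (hw_memLp i j')) fun i ↦ ?_
        have := (hw_indep i).variance_mul_mul_le (hψ_meas i) (fun _ ↦ hψ_sq _)
          (hw_memLp i j) (hw_memLp i j')
        rwa [hw_sq, hw_sq] at this
    _ = n * M ^ 4 * (σ2 : ℝ) ^ 2 / (m : ℝ) ^ 2 := by
      simp only [Fintype.card_fin, v, NNReal.coe_div, NNReal.coe_natCast]
      ring

/-- **Single-step Domino Lemma, off-diagonal case.**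
In a random layer with `m` inputs and `n` units, with weights `w i k ~ N(0, σ²/m)` i.i.d.,
biases `b i ~ N(0, σ_b²)` i.i.d., all mutually independent, pre-activations
`u i = ∑ k w i k * x k + b i` for a fixed input `x`, and `ψ` measurable with `|ψ| ≤ M`,
for distinct column indices `j ≠ j'` the sum `S' = ∑ i ψ(u i)² (w i j) (w i j')` is a sum
of `n` i.i.d. random variables and `Var S' ≤ n M⁴ σ⁴ / m²`.
Here `σ2 = σ²` and `σb2 = σ_b²` denote the variance parameters. -/
theorem domino_offdiagonal
    {Ω : Type*} [MeasurableSpace Ω] (P : Measure Ω) [IsProbabilityMeasure P]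
    (n m : ℕ) (hm : 0 < m) (x : Fin m → ℝ) (σ2 σb2 : ℝ≥0)
    (w : Fin n → Fin m → Ω → ℝ) (b : Fin n → Ω → ℝ)
    (hw_meas : ∀ i k, Measurable (w i k)) (hb_meas : ∀ i, Measurable (b i))
    (hw_law : ∀ i k, Measure.map (w i k) P = gaussianReal 0 (σ2 / (m : ℝ≥0)))
    (hb_law : ∀ i, Measure.map (b i) P = gaussianReal 0 σb2)
    (hindep : iIndepFun
      (Sum.elim (fun p : Fin n × Fin m => w p.1 p.2) b) P)
    (ψ : ℝ → ℝ) (hψ : Measurable ψ) (M : ℝ) (hM : ∀ t, |ψ t| ≤ M)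
    (j j' : Fin m) (hjj' : j ≠ j') :
    iIndepFun
        (fun i : Fin n => fun ω =>
          ψ (∑ k, w i k ω * x k + b i ω) ^ 2 * (w i j ω * w i j' ω)) P
    ∧ (∀ i i' : Fin n,
        IdentDistrib
          (fun ω => ψ (∑ k, w i k ω * x k + b i ω) ^ 2 * (w i j ω * w i j' ω))
          (fun ω => ψ (∑ k, w i' k ω * x k + b i' ω) ^ 2 * (w i' j ω * w i' j' ω)) P P)
    ∧ variance
        (fun ω => ∑ i, ψ (∑ k, w i k ω * x k + b i ω) ^ 2 * (w i j ω * w i j' ω)) P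
      ≤ n * M ^ 4 * (σ2 : ℝ) ^ 2 / (m : ℝ) ^ 2 :=
  domino_offdiagonal_general P n m x σ2 σb2 w b hw_meas hb_meas hw_law hb_law hindep ψ hψ M hM j j'
    hjj'
end

section
/- Let n ≥ 1, let w ∈ ℝ^n be nonzero, and let A₀₀, A₀ₙ, Aₙₙ be real numbers with A₀₀ ≠ 0 and D := A₀₀ Aₙₙ − A₀ₙ² ≠ 0. With w̃ = (w, 0) ∈ ℝ^{n+1} and e₀ = (0, …, 0, 1) ∈ ℝ^{n+1}, define the (n+1)×(n+1) matrix G = A₀₀ I_{n+1} + ((Aₙₙ − A₀₀)/‖w‖²) w̃ w̃ᵀ + (A₀ₙ/‖w‖)(e₀ w̃ᵀ + w̃ e₀ᵀ). Then G is invertible and G⁻¹ = Ā₀₀ I_{n+1} + (X/‖w‖²) w̃ w̃ᵀ + (Y/‖w‖)(e₀ w̃ᵀ + w̃ e₀ᵀ) + Z e₀ e₀ᵀ, where Ā₀₀ = 1/A₀₀, X = A₀₀/D − 1/A₀₀, Y = −A₀ₙ/D, and Z = Aₙₙ/D − 1/A₀₀. -/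
/-!
Put `u = w̃ / ‖w‖` and let `V` be the `2 × (n+1)` matrix with the orthonormal rows `e₀, u`. Then
`G = A₀₀ • 1 + Vᵀ C V` with `C = [[0, A₀ₙ], [A₀ₙ, Aₙₙ - A₀₀]]`: `G` acts as `A₀₀` on the
orthogonal complement of `span {e₀, u}` and as `A₀₀ • 1 + C = [[A₀₀, A₀ₙ], [A₀ₙ, Aₙₙ]]`, of
determinant `D`, on the span. Inverting on both pieces,
`G⁻¹ = A₀₀⁻¹ • 1 + Vᵀ ((A₀₀ • 1 + C)⁻¹ - A₀₀⁻¹ • 1) V`, and `(A₀₀ • 1 + C)⁻¹ - A₀₀⁻¹ • 1` is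
`[[Z, Y], [Y, X]]`.
-/

open Matrix

section LowRankPerturbation

variable {k m R : Type*} [Fintype k] [DecidableEq k] [Fintype m] [DecidableEq m]

theorem smul_one_add_conj_mul_smul_one_add_conj [CommRing R] {V : Matrix k m R}
    (hV : V * Vᵀ = 1) (a b : R) (C C' : Matrix k k R) :
    (a • 1 + Vᵀ * C * V) * (b • 1 + Vᵀ * C' * V)
      = (a * b) • 1 + Vᵀ * (a • C' + b • C + C * C') * V := by
  have hconj : Vᵀ * C * V * (Vᵀ * C' * V) = Vᵀ * (C * C') * V := by
    simp only [Matrix.mul_assoc]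
    rw [← Matrix.mul_assoc V, hV, Matrix.one_mul]
  simp only [Matrix.add_mul, Matrix.mul_add, Matrix.smul_mul, Matrix.mul_smul, Matrix.one_mul,
    Matrix.mul_one, hconj]
  module

theorem smul_one_add_conj_mul_inv [Field R] {V : Matrix k m R} (hV : V * Vᵀ = 1)
    {a : R} (ha : a ≠ 0) {C C' : Matrix k k R} (hC : (a • 1 + C) * (C' + a⁻¹ • 1) = 1) :
    (a • 1 + Vᵀ * C * V) * (a⁻¹ • 1 + Vᵀ * C' * V) = 1 := by
  have hcore : a • C' + a⁻¹ • C + C * C' = 0 := by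
    rw [← sub_eq_zero.mpr hC]
    simp only [Matrix.add_mul, Matrix.mul_add, Matrix.smul_mul, Matrix.mul_smul, Matrix.one_mul,
      Matrix.mul_one]
    match_scalars <;> simp [ha]
  rw [smul_one_add_conj_mul_smul_one_add_conj hV, hcore, mul_inv_cancel₀ ha]
  simp

end LowRankPerturbation

section TwoRows

variable {m R : Type*} [CommRing R]

theorem of_vec2_mul_transpose_eq_one [Fintype m] {u e : m → R} (huu : u ⬝ᵥ u = 1)
    (hue : u ⬝ᵥ e = 0) (hee : e ⬝ᵥ e = 1) : of ![u, e] * (of ![u, e])ᵀ = 1 := by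
  ext i j
  fin_cases i <;> fin_cases j
  exacts [huu, hue, (dotProduct_comm e u).trans hue, hee]

theorem transpose_of_vec2_mul_mul (u e : m → R) (p q q' r : R) :
    (of ![u, e])ᵀ * !![p, q; q', r] * of ![u, e]
      = p • vecMulVec u u + q • vecMulVec u e + q' • vecMulVec e u + r • vecMulVec e e := by
  ext i j
  simp only [Matrix.mul_apply, transpose_apply, of_apply, Fin.sum_univ_two, cons_val_zero,
    cons_val_one, cons_val_fin_one, Matrix.add_apply, Matrix.smul_apply, vecMulVec_apply, smul_eq_mul]
  ring

theorem snoc_dotProduct_snoc {n : ℕ} (u v : Fin n → R) (a b : R) :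
    (Fin.snoc u a : Fin (n + 1) → R) ⬝ᵥ Fin.snoc v b = u ⬝ᵥ v + a * b := by
  simp [dotProduct, Fin.sum_univ_castSucc]

end TwoRows

section NormalizedFrame

variable {K : Type*} [Field K]

theorem transpose_of_vec2_inv_smul_mul_mul {m : Type*} (e x : m → K) (r p q s : K) :
    (of ![e, r⁻¹ • x])ᵀ * !![p, q; q, s] * of ![e, r⁻¹ • x]
      = p • vecMulVec e e + (q / r) • (vecMulVec e x + vecMulVec x e)
        + (s / r ^ 2) • vecMulVec x x := by
  rw [transpose_of_vec2_mul_mul]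
  simp only [smul_vecMulVec, vecMulVec_smul, smul_smul]
  module

theorem of_snoc_mul_transpose_eq_one {n : ℕ} {w : Fin n → K} {r : K} (hr : r ^ 2 = w ⬝ᵥ w)
    (hr0 : r ≠ 0) :
    let V := of ![(Fin.snoc 0 1 : Fin (n + 1) → K), r⁻¹ • Fin.snoc w 0]
    V * Vᵀ = 1 := by
  refine of_vec2_mul_transpose_eq_one ?_ ?_ ?_ <;>
    simp only [dotProduct_smul, smul_dotProduct, snoc_dotProduct_snoc, zero_dotProduct,
      dotProduct_zero, ← hr, mul_one, mul_zero, zero_add, add_zero, smul_eq_mul]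
  field_simp

end NormalizedFrame

theorem smul_one_add_fin_two_mul_inv {K : Type*} [Field K] {a b c D x y z : K} (ha : a ≠ 0)
    (hD : D = a * c - b ^ 2) (hD0 : D ≠ 0) (hx : x = a / D - 1 / a) (hy : y = -b / D)
    (hz : z = c / D - 1 / a) :
    (a • 1 + !![0, b; b, c - a]) * (!![z, y; y, x] + a⁻¹ • 1) = 1 := by
  subst hD hx hy hz
  simp only [one_fin_two, smul_of, smul_cons, smul_empty, of_add_of, cons_add_cons, empty_add_empty,
    mul_fin_two, smul_eq_mul, EmbeddingLike.apply_eq_iff_eq, vecCons_inj, and_true]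
  refine ⟨⟨?_, ?_⟩, ?_, ?_⟩ <;> field_simp <;> ring

theorem unitwise_fisher_inverse_general
    (n : ℕ) (w : Fin n → ℝ) (hw : w ≠ 0)
    (A00 A0n Ann : ℝ) (hA00 : A00 ≠ 0)
    (D : ℝ) (hD : D = A00 * Ann - A0n ^ 2) (hD0 : D ≠ 0)
    (Abar X Y Z : ℝ)
    (hAbar : Abar = 1 / A00) (hX : X = A00 / D - 1 / A00)
    (hY : Y = -A0n / D) (hZ : Z = Ann / D - 1 / A00)
    (G : Matrix (Fin (n + 1)) (Fin (n + 1)) ℝ)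
    (hG : G = A00 • (1 : Matrix (Fin (n + 1)) (Fin (n + 1)) ℝ)
        + ((Ann - A00) / Real.sqrt (∑ k, w k ^ 2) ^ 2) •
            vecMulVec (Fin.snoc w 0 : Fin (n + 1) → ℝ) (Fin.snoc w 0 : Fin (n + 1) → ℝ)
        + (A0n / Real.sqrt (∑ k, w k ^ 2)) •
            (vecMulVec (Fin.snoc 0 1 : Fin (n + 1) → ℝ) (Fin.snoc w 0 : Fin (n + 1) → ℝ)
              + vecMulVec (Fin.snoc w 0 : Fin (n + 1) → ℝ)
                  (Fin.snoc 0 1 : Fin (n + 1) → ℝ))) :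
    IsUnit G ∧
    G⁻¹ = Abar • (1 : Matrix (Fin (n + 1)) (Fin (n + 1)) ℝ)
        + (X / Real.sqrt (∑ k, w k ^ 2) ^ 2) •
            vecMulVec (Fin.snoc w 0 : Fin (n + 1) → ℝ) (Fin.snoc w 0 : Fin (n + 1) → ℝ)
        + (Y / Real.sqrt (∑ k, w k ^ 2)) •
            (vecMulVec (Fin.snoc 0 1 : Fin (n + 1) → ℝ) (Fin.snoc w 0 : Fin (n + 1) → ℝ)
              + vecMulVec (Fin.snoc w 0 : Fin (n + 1) → ℝ)
                  (Fin.snoc 0 1 : Fin (n + 1) → ℝ))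
        + Z • vecMulVec (Fin.snoc 0 1 : Fin (n + 1) → ℝ)
            (Fin.snoc 0 1 : Fin (n + 1) → ℝ) := by
  set r := Real.sqrt (∑ k, w k ^ 2)
  have hr : r ^ 2 = w ⬝ᵥ w := by
    rw [Real.sq_sqrt (by positivity)]
    simp [dotProduct, sq]
  have hr0 : r ≠ 0 := fun h => hw (dotProduct_self_eq_zero.mp (by rw [← hr, h]; ring))
  set V := of ![(Fin.snoc 0 1 : Fin (n + 1) → ℝ), r⁻¹ • Fin.snoc w 0]
  have hGV : G = A00 • 1 + Vᵀ * !![0, A0n; A0n, Ann - A00] * V := by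
    rw [hG, transpose_of_vec2_inv_smul_mul_mul]
    module
  have hGB : G * (A00⁻¹ • 1 + Vᵀ * !![Z, Y; Y, X] * V) = 1 := hGV ▸
    smul_one_add_conj_mul_inv (of_snoc_mul_transpose_eq_one hr hr0) hA00
      (smul_one_add_fin_two_mul_inv hA00 hD hD0 hX hY hZ)
  refine ⟨IsUnit.of_mul_eq_one _ hGB, ?_⟩
  rw [inv_eq_right_inv hGB, transpose_of_vec2_inv_smul_mul_mul, hAbar]
  module

/-- **Explicit inversion of the unit-wise Fisher information matrix.**
For `n ≥ 1`, `w ∈ ℝ^n` nonzero, and reals `A₀₀ ≠ 0`, `A₀ₙ`, `Aₙₙ` with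
`D = A₀₀ Aₙₙ − A₀ₙ² ≠ 0`, the matrix
`G = A₀₀ I + ((Aₙₙ − A₀₀)/‖w‖²) w̃ w̃ᵀ + (A₀ₙ/‖w‖)(e₀ w̃ᵀ + w̃ e₀ᵀ)` (with `w̃ = (w, 0)`
and `e₀ = (0, …, 0, 1)` in `ℝ^{n+1}`) is invertible and
`G⁻¹ = Ā₀₀ I + (X/‖w‖²) w̃ w̃ᵀ + (Y/‖w‖)(e₀ w̃ᵀ + w̃ e₀ᵀ) + Z e₀ e₀ᵀ`, where
`Ā₀₀ = 1/A₀₀`, `X = A₀₀/D − 1/A₀₀`, `Y = −A₀ₙ/D`, `Z = Aₙₙ/D − 1/A₀₀`. -/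
theorem unitwise_fisher_inverse
    (n : ℕ) (hn : 1 ≤ n) (w : Fin n → ℝ) (hw : w ≠ 0)
    (A00 A0n Ann : ℝ) (hA00 : A00 ≠ 0)
    (D : ℝ) (hD : D = A00 * Ann - A0n ^ 2) (hD0 : D ≠ 0)
    (Abar X Y Z : ℝ)
    (hAbar : Abar = 1 / A00) (hX : X = A00 / D - 1 / A00)
    (hY : Y = -A0n / D) (hZ : Z = Ann / D - 1 / A00)
    (G : Matrix (Fin (n + 1)) (Fin (n + 1)) ℝ)
    (hG : G = A00 • (1 : Matrix (Fin (n + 1)) (Fin (n + 1)) ℝ)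
        + ((Ann - A00) / Real.sqrt (∑ k, w k ^ 2) ^ 2) •
            vecMulVec (Fin.snoc w 0 : Fin (n + 1) → ℝ) (Fin.snoc w 0 : Fin (n + 1) → ℝ)
        + (A0n / Real.sqrt (∑ k, w k ^ 2)) •
            (vecMulVec (Fin.snoc 0 1 : Fin (n + 1) → ℝ) (Fin.snoc w 0 : Fin (n + 1) → ℝ)
              + vecMulVec (Fin.snoc w 0 : Fin (n + 1) → ℝ)
                  (Fin.snoc 0 1 : Fin (n + 1) → ℝ))) :
    IsUnit G ∧
    G⁻¹ = Abar • (1 : Matrix (Fin (n + 1)) (Fin (n + 1)) ℝ)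
        + (X / Real.sqrt (∑ k, w k ^ 2) ^ 2) •
            vecMulVec (Fin.snoc w 0 : Fin (n + 1) → ℝ) (Fin.snoc w 0 : Fin (n + 1) → ℝ)
        + (Y / Real.sqrt (∑ k, w k ^ 2)) •
            (vecMulVec (Fin.snoc 0 1 : Fin (n + 1) → ℝ) (Fin.snoc w 0 : Fin (n + 1) → ℝ)
              + vecMulVec (Fin.snoc w 0 : Fin (n + 1) → ℝ)
                  (Fin.snoc 0 1 : Fin (n + 1) → ℝ))
        + Z • vecMulVec (Fin.snoc 0 1 : Fin (n + 1) → ℝ)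
            (Fin.snoc 0 1 : Fin (n + 1) → ℝ) :=
  unitwise_fisher_inverse_general n w hw A00 A0n Ann hA00 D hD hD0 Abar X Y Z hAbar hX hY hZ G hG
end
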